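/- Let s > 0, c, C > 0, r ∈ (1,∞). Suppose u : (0,∞) → [0,∞) measurable and (b_j)_{j∈ℤ} nonnegative satisfy b_j ≤ C ∫₀^∞ t^s 2^{2j(s+1)} e^{-ct2^{2j}} u(t) dt for all j ∈ ℤ. Then Σ_{j∈ℤ} 2^{-2jsr} b_j^r ≤ C' ∫₀^∞ t^{rs} u(t)^r dt/t for a constant C' depending only on s, c, C, r. -/

import Mathlib

open MeasureTheory Set Real
open scoped ENNReal

/-!
Write `a = 4 ^ j`. Hölder's inequality against the weight `exp (-c t a)`, whose integral over
`(0, ∞)` is `(c a)⁻¹`, gives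
`a ^ (-s r) * b j ^ r ≤ C ^ r c ^ (1 - r) ∫ a exp (-c t a) t ^ (r s) u ^ r`,
all powers of `a` but one cancelling. Summing over `j` and exchanging sum and integral leaves
`∑ a exp (-c t a) = t⁻¹ ∑ x exp (-c x)` with `x = t 4 ^ j`, which is `O(t⁻¹)` because
`x exp (-c x) ≤ min x (2 / (c² x))` and the `x` grow geometrically.
-/

theorem ENNReal.lintegral_mul_rpow_le {α : Type*} [MeasurableSpace α] {μ : Measure α}
    {f w : α → ℝ≥0∞} (hf : AEMeasurable f μ) (hw : AEMeasurable w μ) {p : ℝ} (hp : 1 ≤ p) :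
    (∫⁻ a, f a * w a ∂μ) ^ p ≤ (∫⁻ a, w a ∂μ) ^ (p - 1) * ∫⁻ a, f a ^ p * w a ∂μ := by
  have hp0 : 0 < p := by linarith
  have hq : 0 ≤ 1 - p⁻¹ := sub_nonneg.2 (inv_le_one_of_one_le₀ hp)
  have hsplit : ∀ a, (f a ^ p * w a) ^ p⁻¹ * w a ^ (1 - p⁻¹) = f a * w a := fun a => by
    rw [ENNReal.mul_rpow_of_nonneg _ _ (inv_nonneg.2 hp0.le), ENNReal.rpow_rpow_inv hp0.ne',
      mul_assoc, ← ENNReal.rpow_add_of_nonneg _ _ (inv_nonneg.2 hp0.le) hq, add_sub_cancel,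
      ENNReal.rpow_one]
  have holder := ENNReal.lintegral_mul_norm_pow_le (f := fun a => f a ^ p * w a) (g := w)
    ((hf.pow_const p).mul hw) hw (inv_nonneg.2 hp0.le) hq (add_sub_cancel _ _)
  simp only [hsplit] at holder
  calc (∫⁻ a, f a * w a ∂μ) ^ p
      ≤ ((∫⁻ a, f a ^ p * w a ∂μ) ^ p⁻¹ * (∫⁻ a, w a ∂μ) ^ (1 - p⁻¹)) ^ p :=
        ENNReal.rpow_le_rpow holder hp0.le
    _ = (∫⁻ a, w a ∂μ) ^ (p - 1) * ∫⁻ a, f a ^ p * w a ∂μ := by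
        rw [ENNReal.mul_rpow_of_nonneg _ _ hp0.le, ← ENNReal.rpow_mul, ← ENNReal.rpow_mul,
          inv_mul_cancel₀ hp0.ne', ENNReal.rpow_one, mul_comm, sub_mul, one_mul,
          inv_mul_cancel₀ hp0.ne']

theorem lintegral_exp_neg_mul_Ioi_zero {b : ℝ} (hb : 0 < b) :
    ∫⁻ t in Ioi (0 : ℝ), ENNReal.ofReal (exp (-b * t)) = ENNReal.ofReal b⁻¹ := by
  rw [← ofReal_integral_eq_lintegral_ofReal (exp_neg_integrableOn_Ioi 0 hb)
    (ae_of_all _ fun _ => (exp_pos _).le), integral_exp_mul_Ioi (neg_lt_zero.2 hb)]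
  simp

theorem rpow_neg_mul_mul_rpow_mul_inv_rpow_eq {a c C r s : ℝ} (ha : 0 < a) (hc : 0 < c)
    (hC : 0 < C) :
    a ^ (-(s * r)) * (C * a ^ (s + 1)) ^ r * ((c * a)⁻¹) ^ (r - 1) = C ^ r * c ^ (1 - r) * a := by
  rw [mul_rpow hC.le (by positivity), ← rpow_mul ha.le, mul_inv, mul_rpow (by positivity)
    (by positivity), inv_rpow hc.le, inv_rpow ha.le, ← rpow_neg hc.le, ← rpow_neg ha.le]
  have : a ^ (-(s * r)) * a ^ ((s + 1) * r) * a ^ (-(r - 1)) = a := by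
    rw [← rpow_add ha, ← rpow_add ha]; ring_nf; exact rpow_one a
  rw [neg_sub] at this ⊢
  linear_combination C ^ r * c ^ (1 - r) * this

theorem rpow_neg_mul_rpow_le_of_le_heat_lintegral {s c C r a : ℝ} (hc : 0 < c) (hC : 0 < C)
    (hr : 1 ≤ r) (ha : 0 < a) {u : ℝ → ℝ≥0∞} (hu : Measurable u) {β : ℝ≥0∞}
    (hβ : β ≤ ENNReal.ofReal C * ∫⁻ t in Ioi (0 : ℝ),
      ENNReal.ofReal (t ^ s * a ^ (s + 1) * exp (-(c * t * a))) * u t) :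
    ENNReal.ofReal (a ^ (-(s * r))) * β ^ r ≤ ENNReal.ofReal (C ^ r * c ^ (1 - r)) *
      ∫⁻ t in Ioi (0 : ℝ), ENNReal.ofReal (a * exp (-(c * t * a))) *
        (ENNReal.ofReal (t ^ (r * s)) * u t ^ r) := by
  have hr₀ : 0 ≤ r := by linarith
  set w : ℝ → ℝ≥0∞ := fun t => ENNReal.ofReal (exp (-(c * t * a))) with hw_def
  have hw : ∫⁻ t in Ioi (0 : ℝ), w t = ENNReal.ofReal (c * a)⁻¹ := by
    simp only [hw_def, show ∀ t, -(c * t * a) = -(c * a) * t from fun t => by ring]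
    exact lintegral_exp_neg_mul_Ioi_zero (mul_pos hc ha)
  have hβ' : β ≤ ENNReal.ofReal (C * a ^ (s + 1)) *
      ∫⁻ t in Ioi (0 : ℝ), ENNReal.ofReal (t ^ s) * u t * w t := by
    refine hβ.trans_eq ?_
    rw [ENNReal.ofReal_mul hC.le, mul_assoc,
      ← lintegral_const_mul' (ENNReal.ofReal (a ^ (s + 1))) _ ENNReal.ofReal_ne_top]
    congr 1
    refine lintegral_congr fun t => ?_
    rw [mul_right_comm, ENNReal.ofReal_mul' (by positivity), ENNReal.ofReal_mul' (exp_pos _).le]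
    ring
  have hHolder := ENNReal.lintegral_mul_rpow_le (μ := volume.restrict (Ioi 0))
    (f := fun t => ENNReal.ofReal (t ^ s) * u t) (w := w) (by fun_prop) (by fun_prop) hr
  have hpow : ∫⁻ t in Ioi (0 : ℝ), (ENNReal.ofReal (t ^ s) * u t) ^ r * w t =
      ∫⁻ t in Ioi (0 : ℝ), ENNReal.ofReal (t ^ (r * s)) * u t ^ r * w t :=
    setLIntegral_congr_fun measurableSet_Ioi fun t ht => by
      rw [ENNReal.mul_rpow_of_nonneg _ _ hr₀, ENNReal.ofReal_rpow_of_nonneg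
        (rpow_nonneg (le_of_lt ht) _) hr₀, ← rpow_mul (le_of_lt ht), mul_comm s r]
  calc ENNReal.ofReal (a ^ (-(s * r))) * β ^ r
      ≤ ENNReal.ofReal (a ^ (-(s * r))) * (ENNReal.ofReal (C * a ^ (s + 1)) ^ r *
          ((∫⁻ t in Ioi (0 : ℝ), w t) ^ (r - 1) *
            ∫⁻ t in Ioi (0 : ℝ), (ENNReal.ofReal (t ^ s) * u t) ^ r * w t)) := by
        gcongr
        refine (ENNReal.rpow_le_rpow hβ' hr₀).trans ?_
        rw [ENNReal.mul_rpow_of_nonneg _ _ hr₀]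
        exact mul_le_mul_right hHolder _
    _ = ENNReal.ofReal (a ^ (-(s * r)) * (C * a ^ (s + 1)) ^ r * ((c * a)⁻¹) ^ (r - 1)) *
          ∫⁻ t in Ioi (0 : ℝ), ENNReal.ofReal (t ^ (r * s)) * u t ^ r * w t := by
        rw [hw, hpow, ENNReal.ofReal_rpow_of_nonneg (by positivity) hr₀,
          ENNReal.ofReal_rpow_of_nonneg (by positivity) (by linarith),
          ENNReal.ofReal_mul (by positivity), ENNReal.ofReal_mul (by positivity)]
        ring
    _ = _ := by
        rw [rpow_neg_mul_mul_rpow_mul_inv_rpow_eq ha hc hC, ENNReal.ofReal_mul (by positivity),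
          mul_assoc, ← lintegral_const_mul' _ _ ENNReal.ofReal_ne_top]
        congr 1
        refine lintegral_congr fun t => ?_
        rw [ENNReal.ofReal_mul ha.le]
        ring

theorem ENNReal.tsum_ofReal_mul_geometric {a q : ℝ} (ha : 0 ≤ a) (hq₀ : 0 ≤ q) (hq₁ : q < 1) :
    ∑' m : ℕ, ENNReal.ofReal (a * q ^ m) = ENNReal.ofReal (a / (1 - q)) := by
  rw [← ENNReal.ofReal_tsum_of_nonneg (fun m => by positivity)
    ((summable_geometric_of_lt_one hq₀ hq₁).mul_left a), tsum_mul_left,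
    tsum_geometric_of_lt_one hq₀ hq₁, div_eq_mul_inv]

theorem tsum_ofReal_comp_mul_zpow_le {g : ℝ → ℝ} {A B ρ y : ℝ} (hA : 0 ≤ A) (hB : 0 ≤ B)
    (hgA : ∀ x, 0 < x → g x ≤ A * x) (hgB : ∀ x, 0 < x → g x ≤ B * x⁻¹)
    (hρ : 1 < ρ) (hy : 0 < y) :
    ∑' j : ℤ, ENNReal.ofReal (g (y * ρ ^ j)) ≤ ENNReal.ofReal ((A + B) / (1 - ρ⁻¹)) := by
  have hρ₀ : 0 < ρ := by linarith
  have hq₀ : 0 ≤ ρ⁻¹ := by positivity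
  have hq₁ : ρ⁻¹ < 1 := inv_lt_one_of_one_lt₀ hρ
  have hd : 0 < 1 - ρ⁻¹ := sub_pos.2 hq₁
  -- `y * ρ ^ j` crosses `1` between `j = n` and `j = n + 1`
  obtain ⟨n, hn_le, hn_lt⟩ := exists_mem_Ico_zpow (inv_pos.2 hy) hρ
  have hyn : y * ρ ^ n ≤ 1 := by
    simpa [mul_inv_cancel₀ hy.ne'] using mul_le_mul_of_nonneg_left hn_le hy.le
  have hyn₁ : 1 < y * ρ ^ (n + 1) := by
    simpa [mul_inv_cancel₀ hy.ne'] using mul_lt_mul_of_pos_left hn_lt hy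
  have hlarge : ∀ m : ℕ, ENNReal.ofReal (g (y * ρ ^ (n + 1 + m))) ≤
      ENNReal.ofReal (B * ρ⁻¹ ^ m) := fun m => by
    have hmul : y * ρ ^ (n + 1 + m) = y * ρ ^ (n + 1) * ρ ^ m := by
      rw [zpow_add₀ hρ₀.ne', zpow_natCast, mul_assoc]
    have hge : ρ ^ m ≤ y * ρ ^ (n + 1 + m) := by
      rw [hmul]; exact le_mul_of_one_le_left (by positivity) hyn₁.le
    refine ENNReal.ofReal_le_ofReal ((hgB _ (by positivity)).trans ?_)
    rw [inv_pow]
    exact mul_le_mul_of_nonneg_left (inv_anti₀ (by positivity) hge) hB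
  have hsmall : ∀ m : ℕ, ENNReal.ofReal (g (y * ρ ^ (n + 1 + -(m + 1 : ℤ)))) ≤
      ENNReal.ofReal (A * ρ⁻¹ ^ m) := fun m => by
    have hmul : y * ρ ^ (n + 1 + -(m + 1 : ℤ)) = y * ρ ^ n * ρ⁻¹ ^ m := by
      rw [show n + 1 + -(m + 1 : ℤ) = n + -(m : ℤ) by ring, zpow_add₀ hρ₀.ne', zpow_neg,
        zpow_natCast, inv_pow, mul_assoc]
    refine ENNReal.ofReal_le_ofReal ((hgA _ (by positivity)).trans ?_)
    rw [hmul]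
    exact mul_le_mul_of_nonneg_left (mul_le_of_le_one_left (by positivity) hyn) hA
  calc ∑' j : ℤ, ENNReal.ofReal (g (y * ρ ^ j))
      = ∑' k : ℤ, ENNReal.ofReal (g (y * ρ ^ (n + 1 + k))) :=
        ((Equiv.addLeft (n + 1)).tsum_eq fun j => ENNReal.ofReal (g (y * ρ ^ j))).symm
    _ = ∑' m : ℕ, ENNReal.ofReal (g (y * ρ ^ (n + 1 + m)))
          + ∑' m : ℕ, ENNReal.ofReal (g (y * ρ ^ (n + 1 + -(m + 1 : ℤ)))) :=
        tsum_of_nat_of_neg_add_one ENNReal.summable ENNReal.summable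
    _ ≤ ∑' m : ℕ, ENNReal.ofReal (B * ρ⁻¹ ^ m) + ∑' m : ℕ, ENNReal.ofReal (A * ρ⁻¹ ^ m) :=
        add_le_add (ENNReal.tsum_le_tsum hlarge) (ENNReal.tsum_le_tsum hsmall)
    _ = ENNReal.ofReal ((A + B) / (1 - ρ⁻¹)) := by
        rw [ENNReal.tsum_ofReal_mul_geometric hB hq₀ hq₁,
          ENNReal.tsum_ofReal_mul_geometric hA hq₀ hq₁,
          ← ENNReal.ofReal_add (by positivity) (by positivity), add_div, add_comm]

theorem mul_exp_neg_mul_le_inv {c x : ℝ} (hc : 0 < c) (hx : 0 < x) :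
    x * exp (-(c * x)) ≤ 2 / c ^ 2 * x⁻¹ := by
  have h := pow_div_factorial_le_exp (x := c * x) (mul_pos hc hx).le 2
  rw [exp_neg, ← div_eq_mul_inv, div_le_iff₀ (exp_pos _)]
  norm_num [Nat.factorial] at h
  rw [show 2 / c ^ 2 * x⁻¹ * exp (c * x) = 2 * exp (c * x) / (c ^ 2 * x) by field_simp,
    le_div_iff₀ (by positivity)]
  nlinarith

theorem tsum_ofReal_zpow_mul_exp_neg_le {c ρ t : ℝ} (hc : 0 < c) (hρ : 1 < ρ) (ht : 0 < t) :
    ∑' j : ℤ, ENNReal.ofReal (ρ ^ j * exp (-(c * t * ρ ^ j))) ≤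
      ENNReal.ofReal ((1 + 2 / c ^ 2) / (1 - ρ⁻¹)) * ENNReal.ofReal t⁻¹ := by
  have hρ₀ : 0 < ρ := by linarith
  have hsum := tsum_ofReal_comp_mul_zpow_le (g := fun x => x * exp (-(c * x))) zero_le_one
    (by positivity) (fun x hx => by
      rw [one_mul]
      exact mul_le_of_le_one_right hx.le (exp_le_one_iff.2 (by nlinarith)))
    (fun x hx => mul_exp_neg_mul_le_inv hc hx) hρ ht
  calc ∑' j : ℤ, ENNReal.ofReal (ρ ^ j * exp (-(c * t * ρ ^ j)))
      = ∑' j : ℤ, ENNReal.ofReal t⁻¹ *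
          ENNReal.ofReal (t * ρ ^ j * exp (-(c * (t * ρ ^ j)))) :=
        tsum_congr fun j => by
          rw [← ENNReal.ofReal_mul (by positivity)]
          field_simp
    _ = ENNReal.ofReal t⁻¹ * ∑' j : ℤ, ENNReal.ofReal (t * ρ ^ j * exp (-(c * (t * ρ ^ j)))) :=
        ENNReal.tsum_mul_left
    _ ≤ ENNReal.ofReal t⁻¹ * ENNReal.ofReal ((1 + 2 / c ^ 2) / (1 - ρ⁻¹)) :=
        mul_le_mul_right hsum _
    _ = ENNReal.ofReal ((1 + 2 / c ^ 2) / (1 - ρ⁻¹)) * ENNReal.ofReal t⁻¹ := mul_comm _ _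

theorem two_rpow_two_mul_intCast_mul (j : ℤ) (y : ℝ) :
    (2 : ℝ) ^ (2 * (j : ℝ) * y) = ((4 : ℝ) ^ j) ^ y := by
  rw [rpow_mul zero_le_two, rpow_mul zero_le_two, rpow_intCast]
  norm_num

theorem besov_from_heat_lr_general (s c C r : ℝ) (hc : 0 < c) (hC : 0 < C)
    (hr : 1 < r) :
    ∃ C' : ℝ, 0 < C' ∧ ∀ (u : ℝ → ENNReal) (b : ℤ → ENNReal), Measurable u →
      (∀ j : ℤ, b j ≤ ENNReal.ofReal C * ∫⁻ t in Ioi (0 : ℝ),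
          ENNReal.ofReal (t ^ s * (2 : ℝ) ^ (2 * (j : ℝ) * (s + 1)) *
            Real.exp (-(c * t * (2 : ℝ) ^ (2 * (j : ℝ))))) * u t) →
      (∑' j : ℤ, ENNReal.ofReal ((2 : ℝ) ^ (-(2 * (j : ℝ) * s * r))) * b j ^ r) ≤
        ENNReal.ofReal C' * ∫⁻ t in Ioi (0 : ℝ),
          ENNReal.ofReal (t ^ (r * s)) * u t ^ r * ENNReal.ofReal t⁻¹ := by
  set K := C ^ r * c ^ (1 - r)
  set M := (1 + 2 / c ^ 2) / (1 - (4 : ℝ)⁻¹)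
  refine ⟨K * M, by positivity, fun u b hu hb => ?_⟩
  have hblock : ∀ j : ℤ, ENNReal.ofReal ((2 : ℝ) ^ (-(2 * (j : ℝ) * s * r))) * b j ^ r ≤
      ENNReal.ofReal K * ∫⁻ t in Ioi (0 : ℝ), ENNReal.ofReal (4 ^ j * exp (-(c * t * 4 ^ j))) *
        (ENNReal.ofReal (t ^ (r * s)) * u t ^ r) := fun j => by
    have h4 : (2 : ℝ) ^ (2 * (j : ℝ)) = 4 ^ j := by
      simpa using two_rpow_two_mul_intCast_mul j 1
    have hbj := hb j
    rw [two_rpow_two_mul_intCast_mul, h4] at hbj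
    rw [show -(2 * (j : ℝ) * s * r) = 2 * j * -(s * r) by ring, two_rpow_two_mul_intCast_mul]
    exact rpow_neg_mul_rpow_le_of_le_heat_lintegral hc hC hr.le (by positivity) hu hbj
  calc (∑' j : ℤ, ENNReal.ofReal ((2 : ℝ) ^ (-(2 * (j : ℝ) * s * r))) * b j ^ r)
      ≤ ∑' j : ℤ, ENNReal.ofReal K * ∫⁻ t in Ioi (0 : ℝ),
          ENNReal.ofReal (4 ^ j * exp (-(c * t * 4 ^ j))) *
            (ENNReal.ofReal (t ^ (r * s)) * u t ^ r) := ENNReal.tsum_le_tsum hblock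
    _ = ENNReal.ofReal K * ∫⁻ t in Ioi (0 : ℝ),
          (∑' j : ℤ, ENNReal.ofReal (4 ^ j * exp (-(c * t * 4 ^ j)))) *
            (ENNReal.ofReal (t ^ (r * s)) * u t ^ r) := by
        rw [ENNReal.tsum_mul_left]
        simp_rw [← ENNReal.tsum_mul_right]
        rw [lintegral_tsum fun j => by fun_prop]
    _ ≤ ENNReal.ofReal K * ∫⁻ t in Ioi (0 : ℝ), ENNReal.ofReal M *
          (ENNReal.ofReal (t ^ (r * s)) * u t ^ r * ENNReal.ofReal t⁻¹) := by
        gcongr ENNReal.ofReal K * ?_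
        refine setLIntegral_mono' measurableSet_Ioi fun t ht => ?_
        calc _ ≤ ENNReal.ofReal M * ENNReal.ofReal t⁻¹ *
              (ENNReal.ofReal (t ^ (r * s)) * u t ^ r) :=
              mul_le_mul_left (tsum_ofReal_zpow_mul_exp_neg_le hc (by norm_num) ht) _
          _ = _ := by ring
    _ = ENNReal.ofReal (K * M) * ∫⁻ t in Ioi (0 : ℝ),
          ENNReal.ofReal (t ^ (r * s)) * u t ^ r * ENNReal.ofReal t⁻¹ := by
        rw [lintegral_const_mul' _ _ ENNReal.ofReal_ne_top,
          ENNReal.ofReal_mul (p := K) (by positivity), mul_assoc]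

theorem besov_from_heat_lr (s c C r : ℝ) (hs : 0 < s) (hc : 0 < c) (hC : 0 < C)
    (hr : 1 < r) :
    ∃ C' : ℝ, 0 < C' ∧ ∀ (u : ℝ → ENNReal) (b : ℤ → ENNReal), Measurable u →
      (∀ j : ℤ, b j ≤ ENNReal.ofReal C * ∫⁻ t in Ioi (0 : ℝ),
          ENNReal.ofReal (t ^ s * (2 : ℝ) ^ (2 * (j : ℝ) * (s + 1)) *
            Real.exp (-(c * t * (2 : ℝ) ^ (2 * (j : ℝ))))) * u t) →
      (∑' j : ℤ, ENNReal.ofReal ((2 : ℝ) ^ (-(2 * (j : ℝ) * s * r))) * b j ^ r) ≤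
        ENNReal.ofReal C' * ∫⁻ t in Ioi (0 : ℝ),
          ENNReal.ofReal (t ^ (r * s)) * u t ^ r * ENNReal.ofReal t⁻¹ :=
  besov_from_heat_lr_general s c C r hc hC hr
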